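/- Let G = C_{2k} be the even cycle (k ≥ 2, s = 2k). Then the vanishing ideal I(X) is generated, as an ideal of S, by the set {t_i^{q−1} − t_j^{q−1} : 1 ≤ i, j ≤ s} together with the set of all binomials f_σ^r, where r ranges over {1,…,q−2} and σ = A ⊔ B ranges over all partitions of {1,…,s} with |A| = |B| and 1 ∈ A. -/

import Mathlib

open MvPolynomial

noncomputable section

/-- The vanishing ideal `I(X) ⊆ K[t_1,…,t_{2k}]` of the algebraic toric set
`X* = {(x_1x_2, x_2x_3, …, x_{2k}x_1) : x ∈ (Kˣ)^{2k}}` parameterized by the edges of the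
even cycle `C_{2k}`. -/
def cycleVanishingIdeal (K : Type) [Field K] (k : ℕ) :
    Ideal (MvPolynomial (Fin (2 * k)) K) :=
  Ideal.span {f | (∃ d, f.IsHomogeneous d) ∧
    ∀ x : Fin (2 * k) → Kˣ,
      eval (fun i => ((x i * x (finRotate (2 * k) i) : Kˣ) : K)) f = 0}

/-- The recursive labelling function `ρ_σ^r` (with indices `0,…,s−1`, so that the paper's
index `i ∈ {1,…,s}` corresponds to `i−1` here).  The partition `σ = A ⊔ B` of
`{0,…,s−1}` is recorded by the finset `A`, `B` being its complement;
`ρ(0) = r` and `ρ(i+1) = q−1−ρ(i)` if `i` and `i+1` lie in the same part of `σ`,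
`ρ(i+1) = ρ(i)` otherwise. -/
def rho (q : ℕ) (A : Finset ℕ) (r : ℕ) : ℕ → ℕ
  | 0 => r
  | i + 1 => if (i ∈ A ↔ i + 1 ∈ A) then q - 1 - rho q A r i else rho q A r i

/-- The binomial `f_σ^r = t^a − t^b` associated to a partition `σ = A ⊔ B` of
`{0,…,2k−1}` (with `0 ∈ A`) and `r ∈ {1,…,q−2}`: `supp(a) = A`, `supp(b) = B`, and the
exponent of `t_i` is `ρ_σ^r(i)`. -/
def fsr (K : Type) [Field K] (q k : ℕ) (A : Finset ℕ) (r : ℕ) :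
    MvPolynomial (Fin (2 * k)) K :=
  monomial (Finsupp.equivFunOnFinite.symm fun i : Fin (2 * k) =>
      if (i : ℕ) ∈ A then rho q A r i else 0) 1 -
  monomial (Finsupp.equivFunOnFinite.symm fun i : Fin (2 * k) =>
      if (i : ℕ) ∈ A then 0 else rho q A r i) 1

/-!
By linear independence of characters, a homogeneous polynomial vanishing on `X*` lies in the
span of the binomials `t^a - t^b` with `|a| = |b|` whose monomials define the same character of
the torus `(Kˣ)^{2k}`; for the cycle this means `a_{i-1} + a_i ≡ b_{i-1} + b_i (mod q - 1)` at
every vertex. Such a binomial is reduced by induction on the degree: a common variable factors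
out, and an exponent `≥ q - 1` is moved onto a variable of the other monomial using
`t_i^{q-1} - t_j^{q-1}`. What is left has disjoint supports and exponents `< q - 1`, and the
vertex congruences force `a_i - b_i ≡ (-1)^i (a_0 - b_0)`: this pins it down as `± f_σ^r`,
while equality of degrees forces `|A| = |B|`.
-/

open Finset

namespace EvenCycle

section Characters

variable {σ M K : Type*} [CommMonoid M] [Field K]

def monomialChar (P : M →* (σ → K)) (a : σ →₀ ℕ) : M →* K where
  toFun x := eval (P x) (monomial a 1)
  map_one' := by simp [eval_monomial]
  map_mul' x y := by simp [eval_monomial, Finsupp.prod, mul_pow, prod_mul_distrib]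

open scoped Classical in
theorem sum_coeff_filter_monomialChar_eq_zero (P : M →* (σ → K)) {f : MvPolynomial σ K}
    (hf : ∀ x, eval (P x) f = 0) {g : M →* K} (hg : g ∈ f.support.image (monomialChar P)) :
    ∑ m ∈ f.support with monomialChar P m = g, coeff m f = 0 := by
  have hsum : ∑ g ∈ f.support.image (monomialChar P),
      (∑ m ∈ f.support with monomialChar P m = g, coeff m f) • (g : M → K) = 0 := by
    funext x
    have hx := hf x
    rw [f.as_sum, map_sum,
      ← sum_fiberwise_of_maps_to (fun m hm => mem_image_of_mem (monomialChar P) hm)] at hx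
    simp only [Finset.sum_apply, Pi.smul_apply, smul_eq_mul, sum_mul, Pi.zero_apply]
    rw [← hx]
    refine sum_congr rfl fun g _ => sum_congr rfl fun m hm => ?_
    rw [← (mem_filter.1 hm).2]
    simp [monomialChar, eval_monomial]
  exact linearIndependent_iff'.1 (linearIndependent_monoidHom M K) _ _ hsum g hg

theorem mem_of_forall_eval_eq_zero (P : M →* (σ → K)) {J : Ideal (MvPolynomial σ K)}
    {f : MvPolynomial σ K} (hf : ∀ x, eval (P x) f = 0)
    (hJ : ∀ a ∈ f.support, ∀ b ∈ f.support, monomialChar P a = monomialChar P b →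
      monomial a 1 - monomial b 1 ∈ J) :
    f ∈ J := by
  classical
  rw [f.as_sum, ← sum_fiberwise_of_maps_to (fun m hm => mem_image_of_mem (monomialChar P) hm)]
  refine J.sum_mem fun g hg => ?_
  obtain ⟨m₀, hm₀, rfl⟩ := mem_image.1 hg
  have hfiber : ∑ m ∈ f.support with monomialChar P m = monomialChar P m₀,
        monomial m (coeff m f)
      = ∑ m ∈ f.support with monomialChar P m = monomialChar P m₀,
        C (coeff m f) * (monomial m 1 - monomial m₀ 1) := by
    simp only [mul_sub, C_mul_monomial, mul_one, sum_sub_distrib]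
    rw [← map_sum, sum_coeff_filter_monomialChar_eq_zero P hf hg, map_zero, sub_zero]
  rw [hfiber]
  exact J.sum_mem fun m hm =>
    J.mul_mem_left _ (hJ m (mem_filter.1 hm).1 m₀ hm₀ (mem_filter.1 hm).2)

end Characters

section Cycle

variable {K : Type*} [Field K] {n : ℕ}

variable (K n) in
def cyclePoint : (Fin n → Kˣ) →* (Fin n → K) where
  toFun x i := ((x i * x (finRotate n i) : Kˣ) : K)
  map_one' := by ext; simp
  map_mul' x y := by ext; simp; ring

variable (n) in
/-- `vertexExp n m a i` is the exponent, modulo `m`, of `x (finRotate n i)` in the monomial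
`t^a` evaluated at `cyclePoint K n x`. -/
def vertexExp (m : ℕ) : (Fin n →₀ ℕ) →+ (Fin n → ZMod m) where
  toFun a i := a i + a (finRotate n i)
  map_zero' := by ext; simp
  map_add' a b := by ext; simp; ring

theorem vertexExp_apply (m : ℕ) (a : Fin n →₀ ℕ) (i : Fin n) :
    vertexExp n m a i = a i + a (finRotate n i) := rfl

theorem monomialChar_cyclePoint_apply (a : Fin n →₀ ℕ) (x : Fin n → Kˣ) :
    monomialChar (cyclePoint K n) a x
      = ((∏ i, x (finRotate n i) ^ (a i + a (finRotate n i)) : Kˣ) : K) := by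
  have hrot : ∏ i, x i ^ a i = ∏ i, x (finRotate n i) ^ a (finRotate n i) :=
    (Equiv.prod_comp (finRotate n) fun i => x i ^ a i).symm
  calc monomialChar (cyclePoint K n) a x
      = ((∏ i, (x i * x (finRotate n i)) ^ a i : Kˣ) : K) := by
        simp [monomialChar, cyclePoint, eval_monomial, Finsupp.prod_fintype]
    _ = _ := by
        rw [prod_congr rfl fun i _ => mul_pow (x i) _ (a i), prod_mul_distrib, hrot,
          ← prod_mul_distrib]
        exact congrArg _ (prod_congr rfl fun i _ => by rw [pow_add, mul_comm])

theorem monomialChar_cyclePoint_eq_iff [Finite K] {a b : Fin n →₀ ℕ} :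
    monomialChar (cyclePoint K n) a = monomialChar (cyclePoint K n) b ↔
      vertexExp n (Nat.card K - 1) a = vertexExp n (Nat.card K - 1) b := by
  constructor
  · intro h
    funext i
    obtain ⟨g, hg⟩ := IsCyclic.exists_ofOrder_eq_natCard (α := Kˣ)
    have hsingle : ∀ c : Fin n →₀ ℕ, monomialChar (cyclePoint K n) c
        (Pi.mulSingle (finRotate n i) g) = ((g ^ (c i + c (finRotate n i)) : Kˣ) : K) := by
      intro c
      rw [monomialChar_cyclePoint_apply, prod_eq_single i]
      · simp
      · intro j _ hj
        simp [hj]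
      · simp
    have hi := DFunLike.congr_fun h (Pi.mulSingle (finRotate n i) g)
    rw [hsingle, hsingle, Units.val_inj, pow_eq_pow_iff_modEq, hg, Nat.card_units,
      ← ZMod.natCast_eq_natCast_iff] at hi
    simpa [vertexExp_apply] using hi
  · intro h
    refine DFunLike.ext _ _ fun x => ?_
    rw [monomialChar_cyclePoint_apply, monomialChar_cyclePoint_apply]
    refine congrArg _ (prod_congr rfl fun i _ => pow_eq_pow_iff_modEq.2 ?_)
    refine Nat.ModEq.of_dvd (Nat.card_units K ▸ orderOf_dvd_natCard _) ?_
    rw [← ZMod.natCast_eq_natCast_iff]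
    simpa [vertexExp_apply] using congrFun h i

end Cycle

section Reduction

variable {σ R : Type*} [CommRing R] {n m : ℕ}

theorem monomial_add_sub_monomial_add (c a b : σ →₀ ℕ) :
    monomial (c + a) (1 : R) - monomial (c + b) 1
      = monomial c 1 * (monomial a 1 - monomial b 1) := by
  rw [mul_sub, monomial_mul, monomial_mul, one_mul]

theorem vertexExp_add_single_self (c : Fin n →₀ ℕ) (i : Fin n) :
    vertexExp n m (c + Finsupp.single i m) = vertexExp n m c := by
  have hsingle : ∀ j, ((Finsupp.single i m j : ℕ) : ZMod m) = 0 := fun j => by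
    rw [Finsupp.single_apply]; split_ifs <;> simp
  ext j
  simp [vertexExp_apply, hsingle]

theorem exists_eq_add_single_of_le {a : σ →₀ ℕ} {i : σ} {k : ℕ} (h : k ≤ a i) :
    ∃ c, a = c + Finsupp.single i k :=
  ⟨a - Finsupp.single i k, (tsub_add_cancel_of_le (Finsupp.single_le_iff.2 h)).symm⟩

theorem monomial_sub_monomial_mem_of_vertexExp_eq (hm : 0 < m)
    {J : Ideal (MvPolynomial (Fin n) R)} (htoric : ∀ i j, X i ^ m - X j ^ m ∈ J)
    (hreduced : ∀ a b : Fin n →₀ ℕ, (∀ i, a i = 0 ∨ b i = 0) → (∀ i, a i < m ∧ b i < m) →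
      a.degree = b.degree → vertexExp n m a = vertexExp n m b → monomial a 1 - monomial b 1 ∈ J)
    {a b : Fin n →₀ ℕ} (hdeg : a.degree = b.degree) (hv : vertexExp n m a = vertexExp n m b) :
    monomial a 1 - monomial b 1 ∈ J := by
  induction hd : a.degree using Nat.strong_induction_on generalizing a b with
  | _ d ih =>
  have common : ∀ a b : Fin n →₀ ℕ, a.degree = d → b.degree = d →
      vertexExp n m a = vertexExp n m b → ∀ i, 0 < a i → 0 < b i →
      monomial a 1 - monomial b 1 ∈ J := by
    intro a b ha hb hv i hai hbi
    obtain ⟨a, rfl⟩ := exists_eq_add_single_of_le hai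
    obtain ⟨b, rfl⟩ := exists_eq_add_single_of_le hbi
    simp only [map_add, Finsupp.degree_single] at ha hb hv
    rw [add_comm a, add_comm b, monomial_add_sub_monomial_add]
    exact J.mul_mem_left _ (ih a.degree (by omega) (by omega) (add_right_cancel hv) rfl)
  have big : ∀ a b : Fin n →₀ ℕ, a.degree = d → b.degree = d →
      vertexExp n m a = vertexExp n m b → ∀ i, m ≤ a i → monomial a 1 - monomial b 1 ∈ J := by
    intro a b ha hb hv i hi
    obtain ⟨c, rfl⟩ := exists_eq_add_single_of_le hi
    obtain ⟨j, hj⟩ : ∃ j, 0 < b j := by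
      by_contra! hb0
      have : b = 0 := Finsupp.ext fun j => Nat.le_zero.1 (hb0 j)
      simp only [this, map_add, map_zero, Finsupp.degree_single] at ha hb
      omega
    have hshift : monomial (c + Finsupp.single i m) 1 - monomial (c + Finsupp.single j m) 1
        ∈ J := by
      rw [monomial_add_sub_monomial_add, ← X_pow_eq_monomial, ← X_pow_eq_monomial]
      exact J.mul_mem_left _ (htoric i j)
    rw [← sub_add_sub_cancel _ (monomial (c + Finsupp.single j m) 1)]
    refine J.add_mem hshift (common _ _ ?_ hb ?_ j (by simp; omega) hj)
    · simpa only [map_add, Finsupp.degree_single] using ha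
    · rwa [vertexExp_add_single_self] at hv ⊢
  by_cases hcommon : ∃ i, 0 < a i ∧ 0 < b i
  · obtain ⟨i, hai, hbi⟩ := hcommon
    exact common a b hd (hdeg ▸ hd) hv i hai hbi
  by_cases hbiga : ∃ i, m ≤ a i
  · obtain ⟨i, hi⟩ := hbiga
    exact big a b hd (hdeg ▸ hd) hv i hi
  by_cases hbigb : ∃ i, m ≤ b i
  · obtain ⟨i, hi⟩ := hbigb
    rw [← neg_sub]
    exact J.neg_mem (big b a (hdeg ▸ hd) hd hv.symm i hi)
  push Not at hcommon hbiga hbigb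
  exact hreduced a b (fun i => by have := hcommon i; omega) (fun i => ⟨hbiga i, hbigb i⟩) hdeg hv

end Reduction

section Alternating

variable {n : ℕ} {R : Type*} [CommRing R]

theorem val_finRotate_of_lt {i : Fin n} (h : (i : ℕ) + 1 < n) :
    (finRotate n i : ℕ) = i + 1 := by
  obtain ⟨n, rfl⟩ : ∃ n', n = n' + 1 := ⟨n - 1, by omega⟩
  exact coe_finRotate_of_ne_last (Fin.ne_of_val_ne (by simp; omega))

theorem neg_one_pow_finRotate (hn : Even n) (i : Fin n) :
    (-1 : R) ^ (finRotate n i : ℕ) = -(-1) ^ (i : ℕ) := by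
  obtain ⟨n, rfl⟩ : ∃ n', n = n' + 1 := ⟨n - 1, by have := i.pos; omega⟩
  rw [coe_finRotate]
  split_ifs with hi
  · have hodd : Odd n := by simpa [Nat.even_add_one] using hn
    simp [hi, hodd.neg_one_pow]
  · rw [pow_succ, mul_neg_one]

theorem eq_neg_one_pow_mul_of_add_finRotate_eq_zero {D : Fin n → R}
    (hD : ∀ i, D i + D (finRotate n i) = 0) (i : Fin n) :
    D i = (-1) ^ (i : ℕ) * D ⟨0, i.pos⟩ := by
  obtain ⟨i, hi⟩ := i
  induction i with
  | zero => simp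
  | succ i ih =>
    have hrot : finRotate n ⟨i, by omega⟩ = ⟨i + 1, hi⟩ := Fin.ext (val_finRotate_of_lt hi)
    have := hD ⟨i, by omega⟩
    rw [hrot, ih (by omega)] at this
    simp only [pow_succ]
    linear_combination this

end Alternating

section FsrExponents

variable {q n r : ℕ} {A : Finset ℕ}

theorem rho_eq (h0 : 0 ∈ A) (hr : r ≤ q - 1) (i : ℕ) :
    rho q A r i = if (i ∈ A ↔ Even i) then r else q - 1 - r := by
  induction i with
  | zero => simp [rho, h0]
  | succ i ih =>
    simp only [rho, ih, Nat.even_add_one]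
    by_cases hi : i ∈ A <;> by_cases hi' : i + 1 ∈ A <;> by_cases he : Even i <;>
      simp [hi, hi', he] <;> omega

variable (q n) in
def fsrExpA (A : Finset ℕ) (r : ℕ) : Fin n →₀ ℕ :=
  Finsupp.equivFunOnFinite.symm fun i => if (i : ℕ) ∈ A then rho q A r i else 0

variable (q n) in
def fsrExpB (A : Finset ℕ) (r : ℕ) : Fin n →₀ ℕ :=
  Finsupp.equivFunOnFinite.symm fun i => if (i : ℕ) ∈ A then 0 else rho q A r i

theorem fsr_eq (K : Type) [Field K] (k : ℕ) :
    fsr K q k A r = monomial (fsrExpA q (2 * k) A r) 1 - monomial (fsrExpB q (2 * k) A r) 1 :=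
  rfl

theorem fsrExpA_apply (i : Fin n) :
    fsrExpA q n A r i = if (i : ℕ) ∈ A then rho q A r i else 0 := rfl

theorem fsrExpB_apply (i : Fin n) :
    fsrExpB q n A r i = if (i : ℕ) ∈ A then 0 else rho q A r i := rfl

theorem fsrExpA_eq_zero_or_fsrExpB_eq_zero (i : Fin n) :
    fsrExpA q n A r i = 0 ∨ fsrExpB q n A r i = 0 := by
  rw [fsrExpA_apply, fsrExpB_apply]
  split_ifs <;> simp

theorem natCast_fsrExpA_sub_fsrExpB (h0 : 0 ∈ A) (hr : r ≤ q - 1) (i : Fin n) :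
    (fsrExpA q n A r i : ZMod (q - 1)) - fsrExpB q n A r i = (-1) ^ (i : ℕ) * r := by
  have hcast : ((q - 1 - r : ℕ) : ZMod (q - 1)) = -r := by simp [Nat.cast_sub hr]
  rw [fsrExpA_apply, fsrExpB_apply, rho_eq h0 hr]
  by_cases hi : (i : ℕ) ∈ A <;> rcases Nat.even_or_odd (i : ℕ) with he | ho
  · simp [hi, he, he.neg_one_pow]
  · simp [hi, ho.neg_one_pow, hcast, Nat.not_even_iff_odd.2 ho]
  · simp [hi, he, he.neg_one_pow, hcast]
  · simp [hi, ho.neg_one_pow, Nat.not_even_iff_odd.2 ho]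

theorem vertexExp_fsrExpA (h0 : 0 ∈ A) (hr : r ≤ q - 1) (hn : Even n) :
    vertexExp n (q - 1) (fsrExpA q n A r) = vertexExp n (q - 1) (fsrExpB q n A r) := by
  funext i
  have hi := natCast_fsrExpA_sub_fsrExpB h0 hr i
  have hi' := natCast_fsrExpA_sub_fsrExpB h0 hr (finRotate n i)
  rw [neg_one_pow_finRotate hn] at hi'
  simp only [vertexExp_apply]
  linear_combination hi + hi'

theorem two_mul_fsrExpA_sub_fsrExpB (h0 : 0 ∈ A) (hr : r ≤ q - 1) (i : Fin n) :
    2 * ((fsrExpA q n A r i : ℤ) - fsrExpB q n A r i)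
      = (if (i : ℕ) ∈ A then ((q - 1 : ℕ) : ℤ) else -(q - 1 : ℕ))
        + (-1) ^ (i : ℕ) * (2 * r - (q - 1 : ℕ)) := by
  have hcast : ((q - 1 - r : ℕ) : ℤ) = (q - 1 : ℕ) - r := by omega
  rw [fsrExpA_apply, fsrExpB_apply, rho_eq h0 hr]
  by_cases hi : (i : ℕ) ∈ A <;> rcases Nat.even_or_odd (i : ℕ) with he | ho
  · simp [hi, he, he.neg_one_pow]
  · simp [hi, ho.neg_one_pow, hcast, Nat.not_even_iff_odd.2 ho]; ring
  · simp [hi, he, he.neg_one_pow, hcast]; ring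
  · simp [hi, ho.neg_one_pow, Nat.not_even_iff_odd.2 ho]; ring

theorem degree_fsrExpA_eq_iff (h0 : 0 ∈ A) (hr : r ≤ q - 1) (hq : 1 < q) (hn : Even n)
    (hA : A ⊆ range n) :
    (fsrExpA q n A r).degree = (fsrExpB q n A r).degree ↔ A.card = (range n \ A).card := by
  have hsum : 2 * (((fsrExpA q n A r).degree : ℤ) - (fsrExpB q n A r).degree)
      = (q - 1 : ℕ) * ((A.card : ℤ) - (range n \ A).card) := by
    simp only [Finsupp.degree_eq_sum, Nat.cast_sum, ← sum_sub_distrib, mul_sum,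
      two_mul_fsrExpA_sub_fsrExpB h0 hr, sum_add_distrib, ← sum_mul]
    rw [Fin.sum_univ_eq_sum_range (fun i => if i ∈ A then ((q - 1 : ℕ) : ℤ) else -(q - 1 : ℕ)),
      Fin.sum_univ_eq_sum_range (fun i => (-1 : ℤ) ^ i), neg_one_geom_sum, if_pos hn, sum_ite,
      filter_mem_eq_inter, inter_eq_right.2 hA, ← sdiff_eq_filter]
    simp only [sum_const, nsmul_eq_mul]
    ring
  constructor
  · intro h
    rw [h, sub_self, mul_zero, eq_comm, mul_eq_zero] at hsum
    have := hsum.resolve_left (by omega)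
    omega
  · intro h
    rw [h, sub_self, mul_zero, mul_eq_zero] at hsum
    have := hsum.resolve_left two_ne_zero
    omega

end FsrExponents

section Reduced

theorem eq_of_natCast_eq_of_lt {m x y : ℕ} (hx : x < m) (hy : y < m)
    (h : (x : ZMod m) = y) : x = y := by
  rwa [ZMod.natCast_eq_natCast_iff', Nat.mod_eq_of_lt hx, Nat.mod_eq_of_lt hy] at h

theorem eq_and_eq_of_natCast_sub_eq {m x y x' y' : ℕ} (hx : x < m) (hy : y < m) (hx' : x' < m)
    (hy' : y' < m) (hxy : x = 0 ∨ y = 0) (hxy' : x' = 0 ∨ y' = 0) (hzero : x = 0 ↔ x' = 0)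
    (h : (x : ZMod m) - y = x' - y') : x = x' ∧ y = y' := by
  by_cases hx0 : x = 0
  · obtain rfl := hx0
    obtain rfl := hzero.1 rfl
    simp only [Nat.cast_zero, zero_sub, neg_inj] at h
    exact ⟨rfl, eq_of_natCast_eq_of_lt hy hy' h⟩
  · obtain rfl := hxy.resolve_left hx0
    obtain rfl := hxy'.resolve_left (mt hzero.2 hx0)
    simp only [Nat.cast_zero, sub_zero] at h
    exact ⟨eq_of_natCast_eq_of_lt hx hx' h, rfl⟩

variable {n m q : ℕ} {a b : Fin n →₀ ℕ}

theorem natCast_sub_eq_of_vertexExp_eq (hv : vertexExp n m a = vertexExp n m b) (i : Fin n) :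
    (a i : ZMod m) - b i = (-1) ^ (i : ℕ) * ((a ⟨0, i.pos⟩ : ZMod m) - b ⟨0, i.pos⟩) := by
  refine eq_neg_one_pow_mul_of_add_finRotate_eq_zero (D := fun i => (a i : ZMod m) - b i)
    (fun j => ?_) i
  have hj := congrFun hv j
  simp only [vertexExp_apply] at hj
  linear_combination hj

theorem exists_eq_fsrExp_of_reduced (hdisj : ∀ i, a i = 0 ∨ b i = 0)
    (hlt : ∀ i, a i < q - 1 ∧ b i < q - 1) (hv : vertexExp n (q - 1) a = vertexExp n (q - 1) b)
    (hn : 0 < n) (ha0 : a ⟨0, hn⟩ ≠ 0) :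
    ∃ A r, A ⊆ range n ∧ 0 ∈ A ∧ 0 < r ∧ r < q - 1 ∧
      a = fsrExpA q n A r ∧ b = fsrExpB q n A r := by
  set A := a.support.map Fin.valEmbedding
  set r := a ⟨0, hn⟩
  have hmem : ∀ i : Fin n, (i : ℕ) ∈ A ↔ a i ≠ 0 := fun i => by
    rw [← Fin.valEmbedding_apply, mem_map', Finsupp.mem_support_iff]
  have h0 : 0 ∈ A := (hmem ⟨0, hn⟩).2 ha0
  have hr : r < q - 1 := (hlt _).1
  have hb0 : b ⟨0, hn⟩ = 0 := (hdisj _).resolve_left ha0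
  have hrho : ∀ i, 0 < rho q A r i ∧ rho q A r i < q - 1 := fun i => by
    rw [rho_eq h0 hr.le]; split_ifs <;> omega
  have hcoord : ∀ i, a i = fsrExpA q n A r i ∧ b i = fsrExpB q n A r i := fun i => by
    refine eq_and_eq_of_natCast_sub_eq (hlt i).1 (hlt i).2 ?_ ?_ (hdisj i)
      (fsrExpA_eq_zero_or_fsrExpB_eq_zero i) ?_ ?_
    · rw [fsrExpA_apply]; split_ifs <;> have := hrho i <;> omega
    · rw [fsrExpB_apply]; split_ifs <;> have := hrho i <;> omega
    · by_cases hi : (i : ℕ) ∈ A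
      · simp [fsrExpA_apply, hi, (hmem i).1 hi, (hrho i).1.ne']
      · simpa [fsrExpA_apply, hi] using (hmem i).not.1 hi
    · rw [natCast_fsrExpA_sub_fsrExpB h0 hr.le, natCast_sub_eq_of_vertexExp_eq hv, hb0,
        Nat.cast_zero, sub_zero]
  refine ⟨A, r, fun j hj => ?_, h0, Nat.pos_of_ne_zero ha0, hr,
    Finsupp.ext fun i => (hcoord i).1, Finsupp.ext fun i => (hcoord i).2⟩
  obtain ⟨i, -, rfl⟩ := mem_map.1 hj
  exact mem_range.2 i.2

end Reduced

section Generators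

variable {K : Type} [Field K] {q k : ℕ}

variable (K q k) in
def cycleGenerators : Set (MvPolynomial (Fin (2 * k)) K) :=
  {p | ∃ i j : Fin (2 * k), p = X i ^ (q - 1) - X j ^ (q - 1)} ∪
    {p | ∃ (A : Finset ℕ) (r : ℕ), A ⊆ Finset.range (2 * k) ∧ 0 ∈ A ∧
      A.card = (Finset.range (2 * k) \ A).card ∧ 1 ≤ r ∧ r ≤ q - 2 ∧ p = fsr K q k A r}

theorem monomial_sub_monomial_mem_span_cycleGenerators_of_reduced (hq : 1 < q)
    {a b : Fin (2 * k) →₀ ℕ} (hdisj : ∀ i, a i = 0 ∨ b i = 0)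
    (hlt : ∀ i, a i < q - 1 ∧ b i < q - 1) (hdeg : a.degree = b.degree)
    (hv : vertexExp (2 * k) (q - 1) a = vertexExp (2 * k) (q - 1) b) :
    monomial a 1 - monomial b 1 ∈ Ideal.span (cycleGenerators K q k) := by
  rcases Nat.eq_zero_or_pos (2 * k) with hk | hn
  · rw [show a = b from Finsupp.ext fun i => absurd i.pos (by omega), sub_self]
    exact zero_mem _
  have fsr_case : ∀ a b : Fin (2 * k) →₀ ℕ, (∀ i, a i = 0 ∨ b i = 0) →
      (∀ i, a i < q - 1 ∧ b i < q - 1) → a.degree = b.degree →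
      vertexExp (2 * k) (q - 1) a = vertexExp (2 * k) (q - 1) b → a ⟨0, hn⟩ ≠ 0 →
      monomial a 1 - monomial b 1 ∈ Ideal.span (cycleGenerators K q k) := by
    intro a b hdisj hlt hdeg hv ha0
    obtain ⟨A, r, hA, h0, hr0, hr, rfl, rfl⟩ := exists_eq_fsrExp_of_reduced hdisj hlt hv hn ha0
    rw [degree_fsrExpA_eq_iff h0 hr.le hq (even_two_mul k) hA] at hdeg
    exact Ideal.subset_span (Or.inr ⟨A, r, hA, h0, hdeg, hr0, by omega, (fsr_eq K k).symm⟩)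
  by_cases ha0 : a ⟨0, hn⟩ ≠ 0
  · exact fsr_case a b hdisj hlt hdeg hv ha0
  by_cases hb0 : b ⟨0, hn⟩ ≠ 0
  · rw [← neg_sub]
    exact neg_mem (fsr_case b a (fun i => (hdisj i).symm) (fun i => (hlt i).symm) hdeg.symm
      hv.symm hb0)
  have hab : a = b := Finsupp.ext fun i => by
    have hi := natCast_sub_eq_of_vertexExp_eq hv i
    rw [not_not.1 ha0, not_not.1 hb0, sub_self, mul_zero, sub_eq_zero] at hi
    exact eq_of_natCast_eq_of_lt (hlt i).1 (hlt i).2 hi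
  rw [hab, sub_self]
  exact zero_mem _

theorem monomial_sub_monomial_mem_cycleVanishingIdeal [Finite K] {a b : Fin (2 * k) →₀ ℕ}
    (hdeg : a.degree = b.degree)
    (hv : vertexExp (2 * k) (Nat.card K - 1) a = vertexExp (2 * k) (Nat.card K - 1) b) :
    monomial a 1 - monomial b 1 ∈ cycleVanishingIdeal K k := by
  refine Ideal.subset_span ⟨⟨a.degree, (isHomogeneous_monomial 1 rfl).sub
    (isHomogeneous_monomial 1 hdeg.symm)⟩, fun x => ?_⟩
  rw [map_sub, sub_eq_zero]
  exact DFunLike.congr_fun (monomialChar_cyclePoint_eq_iff.2 hv) x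

end Generators

end EvenCycle

open EvenCycle

theorem cycle_vanishing_ideal_generators_general
    (q k : ℕ) (K : Type) [Field K] [Fintype K]
    (hcard : Fintype.card K = q) :
    cycleVanishingIdeal K k = Ideal.span
      ({p : MvPolynomial (Fin (2 * k)) K |
          ∃ i j : Fin (2 * k), p = X i ^ (q - 1) - X j ^ (q - 1)} ∪
       {p : MvPolynomial (Fin (2 * k)) K |
          ∃ (A : Finset ℕ) (r : ℕ), A ⊆ Finset.range (2 * k) ∧ 0 ∈ A ∧
            A.card = (Finset.range (2 * k) \ A).card ∧
            1 ≤ r ∧ r ≤ q - 2 ∧ p = fsr K q k A r}) := by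
  have hq : 1 < q := hcard ▸ Fintype.one_lt_card
  have hcard' : Nat.card K - 1 = q - 1 := by rw [Nat.card_eq_fintype_card, hcard]
  change _ = Ideal.span (cycleGenerators K q k)
  refine le_antisymm (Ideal.span_le.2 ?_) (Ideal.span_le.2 ?_)
  · rintro f ⟨⟨d, hd⟩, hf⟩
    refine mem_of_forall_eval_eq_zero (cyclePoint K (2 * k)) hf fun a ha b hb hab => ?_
    rw [monomialChar_cyclePoint_eq_iff, hcard'] at hab
    refine monomial_sub_monomial_mem_of_vertexExp_eq (by omega)
      (fun i j => Ideal.subset_span (Or.inl ⟨i, j, rfl⟩))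
      (fun a b => monomial_sub_monomial_mem_span_cycleGenerators_of_reduced hq) ?_ hab
    rw [Finsupp.degree_eq_weight_one]
    exact (hd (mem_support_iff.1 ha)).trans (hd (mem_support_iff.1 hb)).symm
  · rintro p (⟨i, j, rfl⟩ | ⟨A, r, hA, h0, hAcard, -, hr, rfl⟩)
    · rw [X_pow_eq_monomial, X_pow_eq_monomial]
      refine monomial_sub_monomial_mem_cycleVanishingIdeal
        (by rw [Finsupp.degree_single, Finsupp.degree_single]) ?_
      rw [← zero_add (Finsupp.single i _), ← zero_add (Finsupp.single j _), hcard',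
        vertexExp_add_single_self, vertexExp_add_single_self]
    · rw [fsr_eq]
      refine monomial_sub_monomial_mem_cycleVanishingIdeal ?_ ?_
      · exact (degree_fsrExpA_eq_iff h0 (by omega) hq (even_two_mul k) hA).2 hAcard
      · rw [hcard']
        exact vertexExp_fsrExpA h0 (by omega) (even_two_mul k)

/-- Let `G = C_{2k}` (`k ≥ 2`, `s = 2k`).  Then `I(X)` is generated by the
toric relations `t_i^{q−1} − t_j^{q−1}` together with all the binomials `f_σ^r` for
`r ∈ {1,…,q−2}` and `σ = A ⊔ B` a partition of the index set with `|A| = |B|` and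
`0 ∈ A` (paper: `1 ∈ A`). -/
theorem cycle_vanishing_ideal_generators
    (q k : ℕ) (hq : 2 < q) (hk : 2 ≤ k) (K : Type) [Field K] [Fintype K]
    (hcard : Fintype.card K = q) :
    cycleVanishingIdeal K k = Ideal.span
      ({p : MvPolynomial (Fin (2 * k)) K |
          ∃ i j : Fin (2 * k), p = X i ^ (q - 1) - X j ^ (q - 1)} ∪
       {p : MvPolynomial (Fin (2 * k)) K |
          ∃ (A : Finset ℕ) (r : ℕ), A ⊆ Finset.range (2 * k) ∧ 0 ∈ A ∧
            A.card = (Finset.range (2 * k) \ A).card ∧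
            1 ≤ r ∧ r ≤ q - 2 ∧ p = fsr K q k A r}) :=
  cycle_vanishing_ideal_generators_general q k K hcard
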